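/- arXiv:math/0601538 — 2 statements merged into one kernel-verified Lean document; each statement's English description precedes it below -/
import Mathlib

section
/- Let R be a commutative noetherian local ring and M a finitely generated R-module of rank r (i.e., M_p is free of rank r over R_p for every associated prime p of R, equivalently U^{-1}M is free of rank r over U^{-1}R where U is the set of nonzerodivisors). Then the minimal number of generators of M satisfies β_0^R(M) ≥ r, with equality if and only if M is free. -/
open CategoryTheory Opposite IsLocalRing

noncomputable section

universe u

variable (R : Type u) [CommRing R]

/-- The minimal number of generators of a module. -/
def nGens (M : Type u) [AddCommGroup M] [Module R M] : ℕ :=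
  sInf {n | ∃ s : Finset M, s.card = n ∧ Submodule.span R (s : Set M) = ⊤}

/-- The length of a module, i.e. the length of a longest chain of submodules,
as a natural number (junk value `0` if infinite). -/
def lengthNat (M : Type u) [AddCommGroup M] [Module R M] : ℕ :=
  ((Order.krullDim (Submodule R M)).unbotD 0).toNat

/-- `M` has rank `r`: the localization of `M` at the set of nonzerodivisors of `R`
is free of rank `r`. -/
def HasRank (M : Type u) [AddCommGroup M] [Module R M] (r : ℕ) : Prop :=
  Nonempty (LocalizedModule (nonZeroDivisors R) M ≃ₗ[Localization (nonZeroDivisors R)]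
    (Fin r → Localization (nonZeroDivisors R)))

/-- A finitely generated module `G` is totally reflexive if the biduality map
`G → G^{**}` is bijective and `Ext^i(G, R) = 0 = Ext^i(G^*, R)` for all `i ≥ 1`. -/
def IsTotallyReflexive (M : Type u) [AddCommGroup M] [Module R M] : Prop :=
  Module.Finite R M ∧ Function.Bijective (Module.Dual.eval R M) ∧
  (∀ i : ℕ, 0 < i →
    Subsingleton (((Ext R (ModuleCat.{u} R) i).obj (op (ModuleCat.of R M))).obj
      (ModuleCat.of R R))) ∧
  (∀ i : ℕ, 0 < i →
    Subsingleton (((Ext R (ModuleCat.{u} R) i).obj (op (ModuleCat.of R (Module.Dual R M)))).obj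
      (ModuleCat.of R R)))

/-- A resolution of a module `M`: a nonnegatively graded chain complex together with
an augmentation map to `M` making the augmented complex exact. -/
structure Resolution (M : Type u) [AddCommGroup M] [Module R M] where
  C : ChainComplex (ModuleCat.{u} R) ℕ
  aug : C.X 0 →ₗ[R] M
  aug_surj : Function.Surjective aug
  exact_zero : Function.Exact (C.d 1 0) aug
  exact_succ : ∀ n : ℕ, Function.Exact (C.d (n + 2) (n + 1)) (C.d (n + 1) n)

namespace Resolution

variable {R}
variable {M : Type u} [AddCommGroup M] [Module R M]

/-- A resolution is bounded if its modules vanish in all high degrees. -/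
def IsBounded (P : Resolution R M) : Prop := ∃ N : ℕ, ∀ n, N < n → Subsingleton (P.C.X n)

/-- A resolution has length at most `i` if its modules vanish in degrees above `i`. -/
def LengthLE (P : Resolution R M) (i : ℕ) : Prop := ∀ n, i < n → Subsingleton (P.C.X n)

/-- A G-resolution: all modules in the resolution are totally reflexive. -/
def IsG (P : Resolution R M) : Prop := ∀ n, IsTotallyReflexive R (P.C.X n)

/-- A resolution by finitely generated free modules. -/
def IsFiniteFree (P : Resolution R M) : Prop :=
  ∀ n, Module.Free R (P.C.X n) ∧ Module.Finite R (P.C.X n)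

/-- A strict G-resolution: degree `0` is totally reflexive and all positive degrees are
finitely generated free. -/
def IsStrict (P : Resolution R M) : Prop :=
  IsTotallyReflexive R (P.C.X 0) ∧
    ∀ n : ℕ, Module.Free R (P.C.X (n + 1)) ∧ Module.Finite R (P.C.X (n + 1))

/-- Minimality of a resolution over a local ring: each differential maps into
`m` times the next module. -/
def IsMinimal [IsLocalRing R] (P : Resolution R M) : Prop :=
  ∀ n : ℕ, LinearMap.range (P.C.d (n + 1) n).hom ≤
    (maximalIdeal R) • (⊤ : Submodule R (P.C.X n))

/-- A resolution is proper if `Hom(H, -)` applied to the augmented resolution is exact for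
every totally reflexive module `H`. -/
def IsProper (P : Resolution R M) : Prop :=
  ∀ (H : Type u) [AddCommGroup H] [Module R H], IsTotallyReflexive R H →
    (Function.Surjective (fun g : H →ₗ[R] P.C.X 0 => P.aug ∘ₗ g)) ∧
    Function.Exact (fun g : H →ₗ[R] P.C.X 1 => ((P.C.d 1 0).hom : P.C.X 1 →ₗ[R] P.C.X 0) ∘ₗ g)
      (fun g : H →ₗ[R] P.C.X 0 => P.aug ∘ₗ g) ∧
    ∀ n : ℕ, Function.Exact
      (fun g : H →ₗ[R] P.C.X (n + 2) =>
        ((P.C.d (n + 2) (n + 1)).hom : P.C.X (n + 2) →ₗ[R] P.C.X (n + 1)) ∘ₗ g)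
      (fun g : H →ₗ[R] P.C.X (n + 1) =>
        ((P.C.d (n + 1) n).hom : P.C.X (n + 1) →ₗ[R] P.C.X n) ∘ₗ g)

end Resolution

/-- `M` has finite projective dimension: it admits a bounded resolution by finitely
generated free modules. -/
def HasFinitePD (M : Type u) [AddCommGroup M] [Module R M] : Prop :=
  ∃ P : Resolution R M, P.IsFiniteFree ∧ P.IsBounded

/-- `M` has finite G-dimension: it admits a bounded G-resolution. -/
def HasFiniteGDim (M : Type u) [AddCommGroup M] [Module R M] : Prop :=
  ∃ P : Resolution R M, P.IsG ∧ P.IsBounded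

/-- `G-dim M ≤ i`. -/
def GDimLE (M : Type u) [AddCommGroup M] [Module R M] (i : ℕ) : Prop :=
  ∃ P : Resolution R M, P.IsG ∧ P.LengthLE i

section Betti

variable [IsLocalRing R]

/-- Precomposition with `f`, on homomorphisms into the residue field. -/
def homRes {A B : ModuleCat.{u} R} (f : A ⟶ B) :
    (B →ₗ[R] ResidueField R) →ₗ[ResidueField R] (A →ₗ[R] ResidueField R) where
  toFun g := g ∘ₗ (f.hom : A →ₗ[R] B)
  map_add' g₁ g₂ := by ext; rfl
  map_smul' c g := by ext; rfl

/-- The `n`-th Betti number of a complex `C`, defined as the dimension over the residue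
field of the `n`-th cohomology of `Hom(C, k)`.  Applied to a proper G-resolution of `M`,
this is the `n`-th relative Betti number `β^G_n(M)` of Avramov–Martsinkovsky; applied to a
free resolution of `M` it is the classical Betti number `β_n(M)`. -/
def gBetti (C : ChainComplex (ModuleCat.{u} R) ℕ) : ℕ → ℕ
  | 0 => Module.finrank (ResidueField R) (LinearMap.ker (homRes R (C.d 1 0)))
  | (n + 1) => Module.finrank (ResidueField R)
      (@HasQuotient.Quotient (LinearMap.ker (homRes R (C.d (n + 2) (n + 1)))) _ Submodule.hasQuotient
        ((LinearMap.range (homRes R (C.d (n + 1) n))).comap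
          (LinearMap.ker (homRes R (C.d (n + 2) (n + 1)))).subtype))

/-- The Euler characteristic of (the Betti numbers of) a complex:
`χ = Σ_n (-1)^n β_n`. -/
def gChi (C : ChainComplex (ModuleCat.{u} R) ℕ) : ℤ :=
  ∑ᶠ n : ℕ, (-1 : ℤ) ^ n * (gBetti R C n : ℤ)

/-- The `i`-th partial Euler characteristic of a complex: `χ_i = Σ_{n ≥ i} (-1)^{n-i} β_n`. -/
def gChiAt (C : ChainComplex (ModuleCat.{u} R) ℕ) (i : ℕ) : ℤ :=
  ∑ᶠ n : ℕ, if i ≤ n then (-1 : ℤ) ^ (n - i) * (gBetti R C n : ℤ) else 0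

end Betti

end

/-! Let `K` be the total ring of fractions of `R`. A generating set of `M` localizes to a
generating set of `K ⊗ M ≅ Kʳ`, so it has at least `r` elements. If it has exactly `r`, it is a
basis of `Kʳ`, because over a commutative ring a surjective endomorphism of a finitely generated
module is injective; since `R` embeds in `K`, the generators are then `R`-linearly independent.
Conversely, a basis of a free `M` localizes to a basis of `Kʳ` and hence has `r` elements. -/

open Module Submodule nonZeroDivisors

section NGens

variable (R : Type u) [CommRing R] (M : Type u) [AddCommGroup M] [Module R M]

theorem exists_finset_card_eq_nGens_span_eq_top [Module.Finite R M] :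
    ∃ s : Finset M, s.card = nGens R M ∧ span R (s : Set M) = ⊤ := by
  obtain ⟨t, ht⟩ := Module.Finite.fg_top (R := R) (M := M)
  exact Nat.sInf_mem (s := {n | ∃ s : Finset M, s.card = n ∧ span R (s : Set M) = ⊤})
    ⟨t.card, t, rfl, ht⟩

variable {R M}

theorem nGens_le_card_of_span_eq_top {ι : Type*} [Fintype ι] {g : ι → M}
    (hg : span R (Set.range g) = ⊤) : nGens R M ≤ Fintype.card ι := by
  classical
  have hspan : span R ((Finset.univ.image g : Finset M) : Set M) = ⊤ := by
    rwa [Finset.coe_image, Finset.coe_univ, Set.image_univ]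
  calc nGens R M ≤ (Finset.univ.image g).card := Nat.sInf_le ⟨_, rfl, hspan⟩
    _ ≤ Fintype.card ι := Finset.card_image_le

end NGens

section LocalizedModule

variable {R : Type u} [CommRing R] {M : Type u} [AddCommGroup M] [Module R M] {r : ℕ}

local notation "K" => Localization R⁰
local notation "ℓ" => LocalizedModule.mkLinearMap R⁰ M

theorem span_localizedModule_eq_top {ι : Type*} {g : ι → M} (hg : span R (Set.range g) = ⊤) :
    span K (Set.range (ℓ ∘ g)) = ⊤ := by
  rw [Set.range_comp]
  exact span_eq_top_of_isLocalizedModule K R⁰ ℓ hg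

variable [Nontrivial R]

theorem HasRank.finrank_localizedModule (hr : HasRank R M r) :
    finrank K (LocalizedModule R⁰ M) = r := by
  have : Nontrivial K := IsFractionRing.nontrivial R K
  obtain ⟨e⟩ := hr
  rw [e.finrank_eq, finrank_fin_fun]

theorem HasRank.le_card_of_span_eq_top (hr : HasRank R M r) {ι : Type*} [Fintype ι] {g : ι → M}
    (hg : span R (Set.range g) = ⊤) : r ≤ Fintype.card ι := by
  rw [← hr.finrank_localizedModule, ← finrank_top, ← span_localizedModule_eq_top hg]
  exact finrank_range_le_card _

theorem HasRank.linearIndependent_of_span_eq_top (hr : HasRank R M r) {ι : Type*} [Fintype ι]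
    {g : ι → M} (hg : span R (Set.range g) = ⊤) (hcard : Fintype.card ι = r) :
    LinearIndependent R g := by
  have hK : LinearIndependent K (ℓ ∘ g) :=
    linearIndependent_of_top_le_span_of_card_eq_finrank (span_localizedModule_eq_top hg).ge
      (hcard.trans hr.finrank_localizedModule.symm)
  exact (hK.restrict_scalars' R).of_comp

theorem HasRank.card_basis_eq (hr : HasRank R M r) {ι : Type*} [Fintype ι] (b : Basis ι R M) :
    Fintype.card ι = r := by
  have : Nontrivial K := IsFractionRing.nontrivial R K
  rw [← hr.finrank_localizedModule, finrank_eq_card_basis (b.ofIsLocalizedModule K R⁰ ℓ)]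

end LocalizedModule

theorem rank_le_nGens_and_eq_iff_free_general
    (R : Type u) [CommRing R] [IsLocalRing R]
    (M : Type u) [AddCommGroup M] [Module R M] [Module.Finite R M]
    (r : ℕ) (hr : HasRank R M r) :
    r ≤ nGens R M ∧ (nGens R M = r ↔ Module.Free R M) := by
  obtain ⟨s, hcard, hs⟩ := exists_finset_card_eq_nGens_span_eq_top R M
  have hs' : span R (Set.range ((↑) : s → M)) = ⊤ := by rwa [Subtype.range_coe]
  have hle : r ≤ nGens R M := by
    simpa [hcard] using hr.le_card_of_span_eq_top hs'
  refine ⟨hle, fun h ↦ ?_, fun _ ↦ ?_⟩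
  · have hli := hr.linearIndependent_of_span_eq_top hs' (by simpa [hcard] using h)
    exact Module.Free.of_basis (Basis.mk hli hs'.ge)
  · let b := Module.Free.chooseBasis R M
    have hgen : nGens R M ≤ r := by
      simpa [hr.card_basis_eq b] using nGens_le_card_of_span_eq_top b.span_eq
    exact le_antisymm hgen hle

/-- If `M` is a finitely generated module of rank `r` over a commutative noetherian local
ring, then `β₀(M) ≥ r`, with equality if and only if `M` is free. -/
theorem rank_le_nGens_and_eq_iff_free
    (R : Type u) [CommRing R] [IsNoetherianRing R] [IsLocalRing R]
    (M : Type u) [AddCommGroup M] [Module R M] [Module.Finite R M]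
    (r : ℕ) (hr : HasRank R M r) :
    r ≤ nGens R M ∧ (nGens R M = r ↔ Module.Free R M) :=
  rank_le_nGens_and_eq_iff_free_general R M r hr
end

section
/- Let R be a commutative noetherian local ring and M a finitely generated R-module of finite projective dimension. Then χ(M) = 0 if and only if Ann_R(M) contains an R-regular element (a nonzerodivisor of R). -/
open CategoryTheory Opposite IsLocalRing

/-! Localize at an associated prime `p` of `R`: the maximal ideal of `R_p` is then associated,
so `R_p` has a nonzero element `x` killed by `𝔪`. If `f : F → G` is injective with `F` free and
`f v ∈ 𝔪 G`, then `x • v = 0`, so no coordinate of `v` is a unit and `v ∈ 𝔪 F`; hence `k ⊗ f` is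
injective and every short exact sequence `0 → F → G → C → 0` of finite free `R_p`-modules has
`C` free. Descending along the localized resolution, `M_p` is free of rank `χ(M)` (the depth-zero
case of Auslander–Buchsbaum). So `χ(M) = 0` iff `M_p = 0` iff `Ann M ⊄ p`, for every associated
prime `p`, and by prime avoidance `Ann M` escapes all associated primes iff it contains a
nonzerodivisor. -/

universe v

open TensorProduct

theorem LinearMap.lTensor_quotient_injective_of_comap_smul_top_le {A F G : Type*} [CommRing A]
    [AddCommGroup F] [Module A F] [AddCommGroup G] [Module A G] (I : Ideal A) (f : F →ₗ[A] G)
    (hf : (I • ⊤ : Submodule A G).comap f ≤ I • ⊤) :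
    Function.Injective (f.lTensor (A ⧸ I)) := by
  let φ := Submodule.mapQ _ _ f (Submodule.smul_top_le_comap_smul_top I f)
  have : f.lTensor (A ⧸ I) = (quotTensorEquivQuotSMul G I).symm ∘ₗ φ ∘ₗ
      quotTensorEquivQuotSMul F I := by
    refine ext' fun r v => ?_
    obtain ⟨r, rfl⟩ := Ideal.Quotient.mk_surjective r
    simp [φ, smul_tmul', Algebra.smul_def]
  rw [this]
  simpa only [LinearMap.coe_comp, LinearEquiv.coe_coe, EmbeddingLike.comp_injective,
    EquivLike.injective_comp, ← LinearMap.ker_eq_bot, φ, Submodule.ker_mapQ,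
    ← LinearMap.le_ker_iff_map, Submodule.ker_mkQ, le_bot_iff] using hf

namespace IsLocalRing

variable {A : Type*} [CommRing A] [IsLocalRing A]

theorem exists_ne_zero_mul_eq_zero_of_maximalIdeal_mem_associatedPrimes [IsNoetherianRing A]
    (hA : maximalIdeal A ∈ associatedPrimes A A) :
    ∃ x : A, x ≠ 0 ∧ ∀ a ∈ maximalIdeal A, a * x = 0 := by
  obtain ⟨hprime, x, hx⟩ := isAssociatedPrime_iff.mp hA
  refine ⟨x, fun h => hprime.ne_top ?_, fun a ha => ?_⟩
  · rw [hx, h, Submodule.colon_singleton_zero]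
  · rw [hx] at ha
    simpa [mul_comm] using Submodule.mem_colon_singleton.mp ha

variable {x : A}

theorem smul_eq_zero_of_mem_maximalIdeal_smul_top (hmx : ∀ a ∈ maximalIdeal A, a * x = 0)
    {G : Type*} [AddCommGroup G] [Module A G] {w : G}
    (hw : w ∈ (maximalIdeal A • ⊤ : Submodule A G)) : x • w = 0 :=
  Submodule.smul_induction_on hw (fun a ha g _ => by rw [smul_smul, mul_comm, hmx a ha, zero_smul])
    fun g h hg hh => by rw [smul_add, hg, hh, add_zero]

theorem mem_maximalIdeal_smul_top_of_injective (hx : x ≠ 0)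
    (hmx : ∀ a ∈ maximalIdeal A, a * x = 0)
    {F G : Type*} [AddCommGroup F] [Module A F] [AddCommGroup G] [Module A G] [Module.Free A F]
    {f : F →ₗ[A] G} (hf : Function.Injective f) {v : F}
    (hv : f v ∈ (maximalIdeal A • ⊤ : Submodule A G)) :
    v ∈ (maximalIdeal A • ⊤ : Submodule A F) := by
  let b := Module.Free.chooseBasis A F
  have hxv : x • v = 0 :=
    hf (by rw [map_smul, smul_eq_zero_of_mem_maximalIdeal_smul_top hmx hv, map_zero])
  have hcoord : ∀ i, b.repr v i ∈ maximalIdeal A := fun i => by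
    refine (mem_maximalIdeal _).mpr fun hu => hx ?_
    have : x * b.repr v i = 0 := by simpa using congrArg (fun w => b.repr w i) hxv
    exact hu.mul_left_eq_zero.mp this
  rw [← b.linearCombination_repr v, Finsupp.linearCombination_apply]
  exact Submodule.sum_mem _ fun i _ => Submodule.smul_mem_smul (hcoord i) Submodule.mem_top

theorem free_and_finrank_add_eq_of_exact (hx : x ≠ 0) (hmx : ∀ a ∈ maximalIdeal A, a * x = 0)
    {F G C : Type*} [AddCommGroup F] [Module A F] [AddCommGroup G] [Module A G]
    [AddCommGroup C] [Module A C] [Module.Free A F] [Module.Finite A F] [Module.Free A G]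
    [Module.Finite A G] {f : F →ₗ[A] G} {g : G →ₗ[A] C} (hf : Function.Injective f)
    (hg : Function.Surjective g) (hfg : Function.Exact f g) :
    Module.Free A C ∧ Module.finrank A F + Module.finrank A C = Module.finrank A G := by
  have : Module.Finite A C := .of_surjective g hg
  have hk : Function.Injective (f.lTensor (ResidueField A)) :=
    f.lTensor_quotient_injective_of_comap_smul_top_le _
      fun _ hv => mem_maximalIdeal_smul_top_of_injective hx hmx hf hv
  have : Module.Free A C := Module.free_of_lTensor_residueField_injective f g hg hfg hk
  obtain ⟨f', hf'⟩ := (split_injective_iff_lTensor_residueField_injective f).mpr hk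
  refine ⟨this, ?_⟩
  rw [(hfg.splitInjectiveEquiv hg ⟨f', hf'⟩).1.finrank_eq, Module.finrank_prod]

theorem free_and_finrank_eq_alternating_sum_of_exact (hx : x ≠ 0)
    (hmx : ∀ a ∈ maximalIdeal A, a * x = 0) {X : ℕ → Type v} [∀ n, AddCommGroup (X n)]
    [∀ n, Module A (X n)] [∀ n, Module.Free A (X n)] [∀ n, Module.Finite A (X n)]
    {d : ∀ n, X (n + 1) →ₗ[A] X n} (hd : ∀ n, Function.Exact (d (n + 1)) (d n)) {T : ℕ}
    (hT : ∀ n, T < n → Subsingleton (X n)) (k : ℕ) {C : Type v} [AddCommGroup C] [Module A C]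
    {g : X k →ₗ[A] C} (hg : Function.Surjective g) (hdg : Function.Exact (d k) g) :
    Module.Free A C ∧ Module.Finite A C ∧ (Module.finrank A C : ℤ) =
      ∑ n ∈ Finset.range (T + 1), (-1) ^ n * (Module.finrank A (X (n + k)) : ℤ) := by
  suffices ∀ m k, T < k + m → ∀ (C : Type v) [AddCommGroup C] [Module A C] (g : X k →ₗ[A] C),
      Function.Surjective g → Function.Exact (d k) g →
      Module.Free A C ∧ Module.Finite A C ∧ (Module.finrank A C : ℤ) =
        ∑ n ∈ Finset.range (T + 1), (-1) ^ n * (Module.finrank A (X (n + k)) : ℤ) from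
    this (T + 1) k (by omega) C g hg hdg
  intro m
  induction m with
  | zero =>
    intro k hk C _ _ g hg _
    have := hT k hk
    have : Subsingleton C := hg.subsingleton
    refine ⟨inferInstance, inferInstance, ?_⟩
    rw [Module.finrank_zero_of_subsingleton, Nat.cast_zero, eq_comm]
    refine Finset.sum_eq_zero fun n _ => ?_
    have := hT (n + k) (by omega)
    rw [Module.finrank_zero_of_subsingleton, Nat.cast_zero, mul_zero]
  | succ m ih =>
    intro k hk C _ _ g hg hdg
    -- `ker g = im (d k)` is a quotient of `X (k + 1)` by `im (d (k + 1))`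
    obtain ⟨hfree, hfin, hrank⟩ := ih (k + 1) (by omega) (LinearMap.ker g)
      ((d k).codRestrict _ fun v => LinearMap.mem_ker.mpr (hdg.apply_apply_eq_zero v))
      (fun ⟨v, hv⟩ => (hdg v).mp hv |>.imp fun _ h => Subtype.ext h)
      (by rw [LinearMap.exact_iff, LinearMap.ker_codRestrict, (hd k).linearMap_ker_eq])
    obtain ⟨hCfree, hCrank⟩ :=
      free_and_finrank_add_eq_of_exact hx hmx (LinearMap.ker g).injective_subtype hg
        g.exact_subtype_ker_map
    refine ⟨hCfree, .of_surjective g hg, ?_⟩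
    have := hT (T + (k + 1)) (by omega)
    rw [Finset.sum_range_succ, Module.finrank_zero_of_subsingleton (M := X (T + (k + 1))),
      Nat.cast_zero, mul_zero, add_zero] at hrank
    have hshift : ∀ n ∈ Finset.range T, (-1 : ℤ) ^ (n + 1) * Module.finrank A (X (n + 1 + k)) =
        -((-1) ^ n * Module.finrank A (X (n + (k + 1)))) := fun n _ => by
      rw [pow_succ, show n + 1 + k = n + (k + 1) by omega]; ring
    rw [Finset.sum_range_succ', Finset.sum_congr rfl hshift, Finset.sum_neg_distrib, ← hrank,
      zero_add, pow_zero, one_mul, ← hCrank]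
    push_cast
    ring

end IsLocalRing

theorem Localization.AtPrime.maximalIdeal_mem_associatedPrimes_of_mem {R : Type*} [CommRing R]
    {p : Ideal R} [p.IsPrime] (hp : p ∈ associatedPrimes R R) :
    maximalIdeal (Localization.AtPrime p) ∈
      associatedPrimes (Localization.AtPrime p) (Localization.AtPrime p) :=
  Module.associatedPrimes.mem_associatedPrimes_of_comap_mem_associatedPrimes_of_isLocalizedModule
    p.primeCompl (Algebra.linearMap R (Localization.AtPrime p)) _
    (by simpa [Localization.AtPrime.under_maximalIdeal] using hp)

theorem Ideal.exists_mem_nonZeroDivisors_iff_forall_associatedPrimes_not_le {R : Type*}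
    [CommRing R] [IsNoetherianRing R] (I : Ideal R) :
    (∃ s ∈ nonZeroDivisors R, s ∈ I) ↔ ∀ p ∈ associatedPrimes R R, ¬I ≤ p := by
  have hzd := biUnion_associatedPrimes_eq_compl_nonZeroDivisors R
  constructor
  · rintro ⟨s, hs, hsI⟩ p hp hIp
    have : s ∈ ⋃ p ∈ associatedPrimes R R, (p : Set R) := Set.mem_biUnion hp (hIp hsI)
    exact (hzd ▸ this) hs
  · intro h
    by_contra! hI
    obtain ⟨p, hp, hIp⟩ := (I.subset_union_prime_finite (associatedPrimes.finite R R) (f := id)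
      0 0 fun _ hp _ _ => hp.isPrime).mp (hzd ▸ fun s hsI hs => hI s hs hsI)
    exact h p hp hIp

namespace Resolution

variable {R : Type u} [CommRing R] {M : Type u} [AddCommGroup M] [Module R M]

noncomputable def eulerChar (F : Resolution R M) : ℤ :=
  ∑ᶠ n : ℕ, (-1 : ℤ) ^ n * (Module.finrank R (F.C.X n) : ℤ)

theorem free_localizedModule_and_eulerChar_eq_finrank [IsNoetherianRing R] {F : Resolution R M}
    (hfree : F.IsFiniteFree) (hbdd : F.IsBounded) {p : Ideal R} [p.IsPrime]
    (hp : p ∈ associatedPrimes R R) :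
    Module.Free (Localization.AtPrime p) (LocalizedModule p.primeCompl M) ∧
      Module.Finite (Localization.AtPrime p) (LocalizedModule p.primeCompl M) ∧
      F.eulerChar = Module.finrank (Localization.AtPrime p) (LocalizedModule p.primeCompl M) := by
  obtain ⟨T, hT⟩ := hbdd
  obtain ⟨x, hx, hmx⟩ := IsLocalRing.exists_ne_zero_mul_eq_zero_of_maximalIdeal_mem_associatedPrimes
    (Localization.AtPrime.maximalIdeal_mem_associatedPrimes_of_mem hp)
  let S := p.primeCompl
  have := fun n => (hfree n).1
  have := fun n => (hfree n).2
  have : ∀ n, Module.Free (Localization.AtPrime p) (LocalizedModule S (F.C.X n)) := fun n =>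
    Module.free_of_isLocalizedModule S (LocalizedModule.mkLinearMap S (F.C.X n))
  have hfinrank : ∀ n, Module.finrank (Localization.AtPrime p) (LocalizedModule S (F.C.X n)) =
      Module.finrank R (F.C.X n) := fun n =>
    Module.finrank_of_isLocalizedModule_of_free _ S (LocalizedModule.mkLinearMap S (F.C.X n))
  obtain ⟨hMfree, hMfin, hM⟩ := IsLocalRing.free_and_finrank_eq_alternating_sum_of_exact hx hmx
    (X := fun n => LocalizedModule S (F.C.X n))
    (d := fun n => LocalizedModule.map S (F.C.d (n + 1) n).hom)
    (fun n => IsLocalizedModule.map_exact S _ _ _ _ _ (F.exact_succ n))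
    (fun n hn => have := hT n hn; inferInstance) 0
    (LocalizedModule.map_surjective S F.aug F.aug_surj)
    (IsLocalizedModule.map_exact S _ _ _ _ _ F.exact_zero)
  refine ⟨hMfree, hMfin, ?_⟩
  have hsupp : (Function.support fun n : ℕ => (-1 : ℤ) ^ n * Module.finrank R (F.C.X n)) ⊆
      Finset.range (T + 1) := fun n hn => by
    by_contra hnT
    have := hT n (by simpa using hnT)
    exact hn (by simp only [← hfinrank, Module.finrank_zero_of_subsingleton, Nat.cast_zero,
      mul_zero])
  rw [hM, eulerChar, finsum_eq_sum_of_support_subset _ hsupp]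
  simp only [hfinrank]
  rfl

theorem eulerChar_eq_zero_iff_not_annihilator_le [IsNoetherianRing R] [Module.Finite R M]
    {F : Resolution R M} (hfree : F.IsFiniteFree) (hbdd : F.IsBounded) {p : Ideal R}
    (hp : p ∈ associatedPrimes R R) : F.eulerChar = 0 ↔ ¬Module.annihilator R M ≤ p := by
  have := hp.isPrime
  obtain ⟨hMfree, hMfin, hχ⟩ := free_localizedModule_and_eulerChar_eq_finrank hfree hbdd hp
  rw [hχ, Nat.cast_eq_zero, Module.finrank_eq_zero_iff_of_free,
    ← Module.notMem_support_iff (p := ⟨p, this⟩), Module.mem_support_iff_of_finite]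

end Resolution

/-- Over a commutative noetherian local ring, a finitely generated module `M` of finite
projective dimension has `χ(M) = 0` if and only if `Ann_R(M)` contains a nonzerodivisor
of `R`. -/
theorem euler_characteristic_eq_zero_iff_annihilator_contains_regular
    (R : Type u) [CommRing R] [IsNoetherianRing R] [IsLocalRing R]
    (M : Type u) [AddCommGroup M] [Module R M] [Module.Finite R M]
    (F : Resolution R M) (hfree : F.IsFiniteFree) (hbdd : F.IsBounded) :
    (∑ᶠ n : ℕ, (-1 : ℤ) ^ n * (Module.finrank R (F.C.X n) : ℤ)) = 0 ↔
      ∃ s ∈ nonZeroDivisors R, s ∈ Module.annihilator R M := by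
  have hχ := fun p (hp : p ∈ associatedPrimes R R) =>
    F.eulerChar_eq_zero_iff_not_annihilator_le hfree hbdd hp
  obtain ⟨p, hp⟩ := associatedPrimes.nonempty R R
  rw [Ideal.exists_mem_nonZeroDivisors_iff_forall_associatedPrimes_not_le]
  exact ⟨fun h q hq => (hχ q hq).mp h, fun h => (hχ p hp).mpr (h p hp)⟩
end
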